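/- arXiv:1305.3775 — 4 statements merged into one kernel-verified Lean document; each statement's English description precedes it below -/
import Mathlib

section
/- Under the hypotheses of the asymptotic contraction theorem in a uniform space with E-distance p (p-complete separated uniform space, T p-continuous, p(Tⁿx,Tⁿy) ≤ φₙ(p(x,y)) with φₙ → φ uniformly on the range of p, φ continuous with φ(t) < t for t > 0), one has p(Tⁿx, Tⁿy) → 0 as n → ∞ for all x, y ∈ X. -/
/-!
Only the real sequence `aₙ = p (Tⁿx) (Tⁿy)` matters. Since `a (n + m) ≤ φₙ (a m)` and
`φₙ (a m) → φ (a m)`, its limit superior `L` satisfies `L ≤ φ (a m)` for every `m`. Along a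
subsequence converging to `L`, continuity of `φ` gives `L ≤ φ L`, which forces `L = 0` because
`φ t < t` for `t > 0`; as `a ≥ 0`, the sequence tends to `0`.
-/

open Filter Topology Set

section AsymptoticContraction

variable {a : ℕ → ℝ} {φn : ℕ → ℝ → ℝ} {φ : ℝ → ℝ}

lemma limsup_le_of_le_shift (ha : ∀ n, 0 ≤ a n) {m : ℕ} {c : ℝ}
    (hm : Tendsto (fun n => φn n (a m)) atTop (𝓝 c))
    (hshift : ∀ n, 1 ≤ n → a (n + m) ≤ φn n (a m)) :
    limsup a atTop ≤ c := by
  rw [← limsup_nat_add a m, ← hm.limsup_eq]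
  refine limsup_le_limsup ?_ (isBoundedUnder_of ⟨0, fun n => ha (n + m)⟩).isCoboundedUnder_le
    hm.isBoundedUnder_le
  filter_upwards [eventually_ge_atTop 1] with n hn
  exact hshift n hn

theorem tendsto_zero_of_le_shift (ha : ∀ n, 0 ≤ a n)
    (hφn : ∀ m, Tendsto (fun n => φn n (a m)) atTop (𝓝 (φ (a m))))
    (hφ_cont : ContinuousOn φ (Ici 0)) (hφ_lt : ∀ t, 0 < t → φ t < t)
    (hshift : ∀ m n, 1 ≤ n → a (n + m) ≤ φn n (a m)) :
    Tendsto a atTop (𝓝 0) := by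
  have hbdd_below : IsBoundedUnder (· ≥ ·) atTop a := isBoundedUnder_of ⟨0, ha⟩
  have hbdd_above : IsBoundedUnder (· ≤ ·) atTop a := by
    refine (hφn 0).isBoundedUnder_le.mono_le ?_
    filter_upwards [eventually_ge_atTop 1] with n hn
    exact hshift 0 n hn
  set L := limsup a atTop
  have hL_le : ∀ m, L ≤ φ (a m) := fun m => limsup_le_of_le_shift ha (hφn m) (hshift m)
  obtain ⟨σ, hσL, -⟩ := exists_seq_tendsto_limsup hbdd_below.isCoboundedUnder_le hbdd_above
  have hL_nonneg : 0 ≤ L := ge_of_tendsto' hσL fun k => ha (σ k)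
  have hφσ : Tendsto (fun k => φ (a (σ k))) atTop (𝓝 (φ L)) :=
    (hφ_cont L hL_nonneg).tendsto.comp
      (tendsto_nhdsWithin_iff.2 ⟨hσL, .of_forall fun k => ha (σ k)⟩)
  have hL_le_φL : L ≤ φ L := ge_of_tendsto' hφσ fun k => hL_le (σ k)
  have hL_nonpos : L ≤ 0 := not_lt.1 fun hL => (hL_le_φL.trans_lt (hφ_lt L hL)).false
  exact tendsto_of_le_liminf_of_limsup_le
    (le_liminf_of_le hbdd_above.isCoboundedUnder_ge (.of_forall ha)) hL_nonpos

end AsymptoticContraction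

theorem stmt_6_general {X : Type*}
    (p : X → X → ℝ)
    (hp_nonneg : ∀ x y, 0 ≤ p x y)
    (T : X → X)
    (φn : ℕ → ℝ → ℝ) (φ : ℝ → ℝ)
    (hunif : TendstoUniformlyOn φn φ atTop (Set.range fun q : X × X => p q.1 q.2))
    (hφ_cont : ContinuousOn φ (Set.Ici 0))
    (hφ_lt : ∀ t, 0 < t → φ t < t)
    (hcontr : ∀ x y : X, ∀ n : ℕ, 1 ≤ n → p (T^[n] x) (T^[n] y) ≤ φn n (p x y)) :
    ∀ x y : X, Tendsto (fun n => p (T^[n] x) (T^[n] y)) atTop (nhds 0) := by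
  intro x y
  refine tendsto_zero_of_le_shift (fun n => hp_nonneg _ _)
    (fun m => hunif.tendsto_at ⟨(T^[m] x, T^[m] y), rfl⟩) hφ_cont hφ_lt fun m n hn => ?_
  simpa only [Function.iterate_add_apply] using hcontr (T^[m] x) (T^[m] y) n hn

/-- Under the hypotheses of the asymptotic contraction theorem,
`p (Tⁿx) (Tⁿy) → 0` for all `x, y`. -/
theorem stmt_6 {X : Type*} [UniformSpace X] [T2Space X]
    (p : X → X → ℝ)
    (hp_nonneg : ∀ x y, 0 ≤ p x y)
    (hp_tri : ∀ x y z, p x z ≤ p x y + p y z)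
    (hp_ent : ∀ U ∈ uniformity X, ∃ δ > (0:ℝ),
      ∀ x y z : X, p z x ≤ δ → p z y ≤ δ → (x, y) ∈ U)
    (hp_complete : ∀ xs : ℕ → X,
      Tendsto (fun q : ℕ × ℕ => p (xs q.1) (xs q.2)) atTop (nhds 0) →
      ∃ l : X, Tendsto (fun n => p (xs n) l) atTop (nhds 0))
    (T : X → X)
    (hT_cont : ∀ (xs : ℕ → X) (x : X),
      Tendsto (fun n => p (xs n) x) atTop (nhds 0) →
      Tendsto (fun n => p (T (xs n)) (T x)) atTop (nhds 0))
    (φn : ℕ → ℝ → ℝ) (φ : ℝ → ℝ)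
    (hφn_nonneg : ∀ n t, 0 ≤ t → 0 ≤ φn n t)
    (hunif : TendstoUniformlyOn φn φ atTop (Set.range fun q : X × X => p q.1 q.2))
    (hφ_cont : ContinuousOn φ (Set.Ici 0))
    (hφ_lt : ∀ t, 0 < t → φ t < t)
    (hcontr : ∀ x y : X, ∀ n : ℕ, 1 ≤ n → p (T^[n] x) (T^[n] y) ≤ φn n (p x y)) :
    ∀ x y : X, Tendsto (fun n => p (T^[n] x) (T^[n] y)) atTop (nhds 0) :=
  stmt_6_general p hp_nonneg T φn φ hunif hφ_cont hφ_lt hcontr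
end

section
/- Let X be a uniform space with E-distance p and T : X → X satisfying p(Tⁿx,Tⁿy) ≤ φₙ(p(x,y)) for all x,y ∈ X and n ≥ 1, where the nonnegative functions φₙ converge uniformly on the range of p to a continuous φ with φ(t) < t for all t > 0 and φₙ are eventually continuous. Then for every x ∈ X, the Picard sequence {Tⁿx} is p-Cauchy. -/
open Filter

/-!
Continuity of `φ` and `φ t < t` give, on every interval `[0, B]`, a uniform gap
`φ t ≤ max ε (t - η)`; uniform convergence transfers it to one iterate `T^[j]`, and
iterating that step shows `p (T^[n] a) (T^[n] b) → 0` for every pair `a, b`.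
For the Cauchy property choose `δ ≤ ε` with `p x y ≤ ε + δ → p (T^[j] x) (T^[j] y) ≤ ε`.
Once `p (T^[m] x) (T^[m+g] x) ≤ δ` for all `g ≤ j` (and in the reverse order), the triangle
inequality through `T^[m+j] x` propagates the bound `ε` to all `g` by induction in steps of `j`.
-/

open Set

section RealFunction

variable {φ : ℝ → ℝ}

lemma le_self_of_continuousOn_of_lt_self (hφ_cont : ContinuousOn φ (Ici 0))
    (hφ_lt : ∀ t, 0 < t → φ t < t) {t : ℝ} (ht : 0 ≤ t) : φ t ≤ t := by
  rw [← closure_Ioi] at hφ_cont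
  exact le_on_closure (s := Ioi 0) (fun s hs => (hφ_lt s hs).le) hφ_cont continuousOn_id
    (by rwa [closure_Ioi])

lemma exists_pos_le_max_sub (hφ_cont : ContinuousOn φ (Ici 0))
    (hφ_lt : ∀ t, 0 < t → φ t < t) {ε : ℝ} (hε : 0 < ε) (B : ℝ) :
    ∃ η > 0, ∀ t ∈ Icc 0 B, φ t ≤ max ε (t - η) := by
  obtain ⟨t₀, ht₀, hmin⟩ := isCompact_Icc.exists_isMinOn
    (nonempty_Icc.2 (le_max_left ε B))
    (continuousOn_id.sub (hφ_cont.mono fun t ht => hε.le.trans ht.1))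
  refine ⟨t₀ - φ t₀, sub_pos.2 (hφ_lt t₀ (hε.trans_le ht₀.1)), fun t ht => ?_⟩
  rcases le_total t ε with htε | htε
  · exact le_max_of_le_left ((le_self_of_continuousOn_of_lt_self hφ_cont hφ_lt ht.1).trans htε)
  · have := isMinOn_iff.1 hmin t ⟨htε, ht.2.trans (le_max_right ε B)⟩
    simp only [Pi.sub_apply, id_eq] at this
    exact le_max_of_le_right (by linarith)

end RealFunction

lemma eventually_le_of_le_max_sub {d : ℕ → ℝ} {ε η B : ℝ} {N j : ℕ} (hη : 0 < η)
    (hB : ∀ n ≥ N, d n ≤ B) (hstep : ∀ n ≥ N, d (n + j) ≤ max ε (d n - η)) :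
    ∀ᶠ n in atTop, d n ≤ ε := by
  have decay : ∀ i : ℕ, ∀ n ≥ N + i * j, d n ≤ max ε (B - i * η) := by
    intro i
    induction i with
    | zero => exact fun n hn => le_max_of_le_right (by simpa using hB n (by simpa using hn))
    | succ i ih =>
      intro n hn
      obtain ⟨m, rfl⟩ : ∃ m, n = m + j := ⟨n - j, by rw [add_mul] at hn; omega⟩
      have hm : N + i * j ≤ m := by rw [add_mul] at hn; omega
      calc d (m + j) ≤ max ε (d m - η) := hstep m (le_of_add_le_left hm)
        _ ≤ max ε (max ε (B - i * η) - η) := by gcongr; exact ih m hm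
        _ ≤ max ε (B - ↑(i + 1) * η) := by
          refine max_le (le_max_left _ _) ?_
          rw [← max_sub_sub_right]
          push_cast
          exact max_le (le_max_of_le_left (by linarith)) (le_max_of_le_right (by linarith))
  obtain ⟨i, hi⟩ := exists_nat_ge ((B - ε) / η)
  have hiη : B - i * η ≤ ε := by rw [div_le_iff₀ hη] at hi; linarith
  exact eventually_atTop.2 ⟨N + i * j, fun n hn => (decay i n hn).trans (max_le le_rfl hiη)⟩

lemma le_of_shift_le_of_near_diagonal {d : ℕ → ℕ → ℝ} {ε δ : ℝ} {j K : ℕ} (hj : 1 ≤ j)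
    (hδε : δ ≤ ε) (hsymm : ∀ m n, d m n = d n m) (htri : ∀ a b c, d a c ≤ d a b + d b c)
    (hstep : ∀ m n, d m n ≤ ε + δ → d (m + j) (n + j) ≤ ε)
    (hnear : ∀ m ≥ K, ∀ g ≤ j, d m (m + g) ≤ δ) :
    ∀ m ≥ K + j, ∀ n ≥ K + j, d m n ≤ ε := by
  have forward : ∀ g, ∀ m ≥ K + j, d m (m + g) ≤ ε := by
    intro g
    induction g using Nat.strong_induction_on with
    | _ g ih =>
      intro m hm
      rcases le_or_gt g j with hg | hg
      · exact (hnear m (by omega) g hg).trans hδε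
      · obtain ⟨u, rfl⟩ : ∃ u, m = u + j := ⟨m - j, by omega⟩
        have hfar : d (u + j) (u + g) ≤ ε := by
          simpa [show u + j + (g - j) = u + g by omega] using ih (g - j) (by omega) (u + j) hm
        have hclose : d u (u + j) ≤ δ := hnear u (by omega) j le_rfl
        have := hstep u (u + g) (by linarith [htri u (u + j) (u + g)])
        rwa [show u + g + j = u + j + g by omega] at this
  intro m hm n hn
  rcases le_total m n with h | h
  · obtain ⟨g, rfl⟩ := Nat.exists_eq_add_of_le h
    exact forward g m hm
  · obtain ⟨g, rfl⟩ := Nat.exists_eq_add_of_le h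
    rw [hsymm]
    exact forward g n hn

section Contraction

variable {X : Type*} {p : X → X → ℝ} {T : X → X} {φn : ℕ → ℝ → ℝ} {φ : ℝ → ℝ}

lemma exists_iterate_le_max_sub (hp_nonneg : ∀ x y, 0 ≤ p x y)
    (hunif : TendstoUniformlyOn φn φ atTop (range fun q : X × X => p q.1 q.2))
    (hφ_cont : ContinuousOn φ (Ici 0)) (hφ_lt : ∀ t, 0 < t → φ t < t)
    (hcontr : ∀ x y : X, ∀ n : ℕ, 1 ≤ n → p (T^[n] x) (T^[n] y) ≤ φn n (p x y))
    {ε : ℝ} (hε : 0 < ε) (B : ℝ) :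
    ∃ j ≥ 1, ∃ η > 0, ∀ x y, p x y ≤ B → p (T^[j] x) (T^[j] y) ≤ max ε (p x y - η) := by
  obtain ⟨η, hη, hgap⟩ := exists_pos_le_max_sub hφ_cont hφ_lt (half_pos hε) B
  set ρ := min (ε / 2) (η / 2)
  obtain ⟨j, hclose, hj⟩ := ((Metric.tendstoUniformlyOn_iff.1 hunif ρ (by positivity)).and
    (eventually_ge_atTop 1)).exists
  refine ⟨j, hj, η / 2, half_pos hη, fun x y hxy => ?_⟩
  have happrox : φn j (p x y) ≤ φ (p x y) + ρ := by
    have := hclose (p x y) ⟨(x, y), rfl⟩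
    rw [Real.dist_eq, abs_sub_lt_iff] at this
    linarith
  calc p (T^[j] x) (T^[j] y) ≤ φn j (p x y) := hcontr x y j hj
    _ ≤ max (ε / 2) (p x y - η) + ρ := happrox.trans (by gcongr; exact hgap _ ⟨hp_nonneg x y, hxy⟩)
    _ ≤ max ε (p x y - η / 2) := by
      rw [← max_add_add_right, max_le_iff]
      exact ⟨le_max_of_le_left (by linarith [min_le_left (ε / 2) (η / 2)]),
        le_max_of_le_right (by linarith [min_le_right (ε / 2) (η / 2)])⟩

lemma exists_iterate_le_of_le_add (hp_nonneg : ∀ x y, 0 ≤ p x y)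
    (hunif : TendstoUniformlyOn φn φ atTop (range fun q : X × X => p q.1 q.2))
    (hφ_cont : ContinuousOn φ (Ici 0)) (hφ_lt : ∀ t, 0 < t → φ t < t)
    (hcontr : ∀ x y : X, ∀ n : ℕ, 1 ≤ n → p (T^[n] x) (T^[n] y) ≤ φn n (p x y))
    {ε : ℝ} (hε : 0 < ε) :
    ∃ j ≥ 1, ∃ δ > 0, δ ≤ ε ∧ ∀ x y, p x y ≤ ε + δ → p (T^[j] x) (T^[j] y) ≤ ε := by
  obtain ⟨j, hj, η, hη, hstep⟩ :=
    exists_iterate_le_max_sub hp_nonneg hunif hφ_cont hφ_lt hcontr hε (2 * ε)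
  refine ⟨j, hj, min ε η, lt_min hε hη, min_le_left ε η, fun x y hxy => ?_⟩
  have := min_le_left ε η
  have := min_le_right ε η
  exact (hstep x y (by linarith)).trans (max_le le_rfl (by linarith))

lemma eventually_iterate_iterate_le (hp_nonneg : ∀ x y, 0 ≤ p x y)
    (hunif : TendstoUniformlyOn φn φ atTop (range fun q : X × X => p q.1 q.2))
    (hφ_cont : ContinuousOn φ (Ici 0)) (hφ_lt : ∀ t, 0 < t → φ t < t)
    (hcontr : ∀ x y : X, ∀ n : ℕ, 1 ≤ n → p (T^[n] x) (T^[n] y) ≤ φn n (p x y))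
    (a b : X) {ε : ℝ} (hε : 0 < ε) :
    ∀ᶠ n in atTop, p (T^[n] a) (T^[n] b) ≤ ε := by
  obtain ⟨N, hN⟩ := ((Metric.tendstoUniformlyOn_iff.1 hunif 1 one_pos).and
    (eventually_ge_atTop 1)).exists_forall_of_atTop
  have hB : ∀ n ≥ N, p (T^[n] a) (T^[n] b) ≤ φ (p a b) + 1 := by
    intro n hn
    have := (hN n hn).1 (p a b) ⟨(a, b), rfl⟩
    rw [Real.dist_eq, abs_sub_lt_iff] at this
    linarith [hcontr a b n (hN n hn).2]
  obtain ⟨j, -, η, hη, hstep⟩ :=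
    exists_iterate_le_max_sub hp_nonneg hunif hφ_cont hφ_lt hcontr hε (φ (p a b) + 1)
  refine eventually_le_of_le_max_sub (j := j) hη hB fun n hn => ?_
  simpa only [Function.iterate_add_apply, add_comm n j] using hstep _ _ (hB n hn)

lemma exists_forall_iterate_le (hp_nonneg : ∀ x y, 0 ≤ p x y)
    (hp_tri : ∀ x y z, p x z ≤ p x y + p y z)
    (hunif : TendstoUniformlyOn φn φ atTop (range fun q : X × X => p q.1 q.2))
    (hφ_cont : ContinuousOn φ (Ici 0)) (hφ_lt : ∀ t, 0 < t → φ t < t)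
    (hcontr : ∀ x y : X, ∀ n : ℕ, 1 ≤ n → p (T^[n] x) (T^[n] y) ≤ φn n (p x y))
    (x : X) {ε : ℝ} (hε : 0 < ε) :
    ∃ K, ∀ m ≥ K, ∀ n ≥ K, p (T^[m] x) (T^[n] x) ≤ ε := by
  obtain ⟨j, hj, δ, hδ, hδε, hstep⟩ :=
    exists_iterate_le_of_le_add hp_nonneg hunif hφ_cont hφ_lt hcontr hε
  have hnear : ∀ᶠ m in atTop, ∀ g ∈ Iic j,
      p (T^[m] x) (T^[m + g] x) ≤ δ ∧ p (T^[m + g] x) (T^[m] x) ≤ δ := by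
    refine (eventually_all_finite (finite_Iic j)).2 fun g _ => ?_
    filter_upwards [eventually_iterate_iterate_le hp_nonneg hunif hφ_cont hφ_lt hcontr x
        (T^[g] x) hδ, eventually_iterate_iterate_le hp_nonneg hunif hφ_cont hφ_lt hcontr
        (T^[g] x) x hδ] with m h₁ h₂
    rw [Function.iterate_add_apply]
    exact ⟨h₁, h₂⟩
  obtain ⟨K, hK⟩ := eventually_atTop.1 hnear
  let d m n := max (p (T^[m] x) (T^[n] x)) (p (T^[n] x) (T^[m] x))
  have hbound := le_of_shift_le_of_near_diagonal (d := d) (K := K) hj hδε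
    (fun m n => max_comm _ _)
    (fun a b c => max_le_iff.2
      ⟨(hp_tri _ _ _).trans (add_le_add (le_max_left _ _) (le_max_left _ _)),
       (hp_tri _ _ _).trans ((add_comm _ _).le.trans
         (add_le_add (le_max_right _ _) (le_max_right _ _)))⟩)
    (fun m n hmn => by
      simp only [d, Function.iterate_add_apply, add_comm _ j, max_le_iff] at hmn ⊢
      exact ⟨hstep _ _ hmn.1, hstep _ _ hmn.2⟩)
    (fun m hm g hg => max_le (hK m hm g hg).1 (hK m hm g hg).2)
  exact ⟨K + j, fun m hm n hn => (le_max_left _ _).trans (hbound m hm n hn)⟩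

end Contraction

theorem stmt_7_general {X : Type*}
    (p : X → X → ℝ)
    (hp_nonneg : ∀ x y, 0 ≤ p x y)
    (hp_tri : ∀ x y z, p x z ≤ p x y + p y z)
    (T : X → X)
    (φn : ℕ → ℝ → ℝ) (φ : ℝ → ℝ)
    (hunif : TendstoUniformlyOn φn φ atTop (Set.range fun q : X × X => p q.1 q.2))
    (hφ_cont : ContinuousOn φ (Set.Ici 0))
    (hφ_lt : ∀ t, 0 < t → φ t < t)
    (hcontr : ∀ x y : X, ∀ n : ℕ, 1 ≤ n → p (T^[n] x) (T^[n] y) ≤ φn n (p x y)) :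
    ∀ x : X,
      Tendsto (fun q : ℕ × ℕ => p (T^[q.1] x) (T^[q.2] x)) atTop (nhds 0) := by
  intro x
  refine tendsto_order.2 ⟨fun a ha => Eventually.of_forall fun q => ha.trans_le (hp_nonneg _ _),
    fun ε hε => ?_⟩
  obtain ⟨K, hK⟩ :=
    exists_forall_iterate_le hp_nonneg hp_tri hunif hφ_cont hφ_lt hcontr x (half_pos hε)
  exact eventually_atTop.2 ⟨(K, K), fun q hq => (hK q.1 hq.1 q.2 hq.2).trans_lt (half_lt_self hε)⟩

/-- For an E-asymptotic contraction, every Picard sequence is p-Cauchy. -/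
theorem stmt_7 {X : Type*} [UniformSpace X]
    (p : X → X → ℝ)
    (hp_nonneg : ∀ x y, 0 ≤ p x y)
    (hp_tri : ∀ x y z, p x z ≤ p x y + p y z)
    (hp_ent : ∀ U ∈ uniformity X, ∃ δ > (0:ℝ),
      ∀ x y z : X, p z x ≤ δ → p z y ≤ δ → (x, y) ∈ U)
    (T : X → X)
    (φn : ℕ → ℝ → ℝ) (φ : ℝ → ℝ)
    (hφn_nonneg : ∀ n t, 0 ≤ t → 0 ≤ φn n t)
    (hφn_cont : ∃ N : ℕ, ∀ n ≥ N, ContinuousOn (φn n) (Set.Ici 0))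
    (hunif : TendstoUniformlyOn φn φ atTop (Set.range fun q : X × X => p q.1 q.2))
    (hφ_cont : ContinuousOn φ (Set.Ici 0))
    (hφ_lt : ∀ t, 0 < t → φ t < t)
    (hcontr : ∀ x y : X, ∀ n : ℕ, 1 ≤ n → p (T^[n] x) (T^[n] y) ≤ φn n (p x y)) :
    ∀ x : X,
      Tendsto (fun q : ℕ × ℕ => p (T^[q.1] x) (T^[q.2] x)) atTop (nhds 0) :=
  stmt_7_general p hp_nonneg hp_tri T φn φ hunif hφ_cont hφ_lt hcontr
end

section
/- Let X be a uniform space with E-distance p and T : X → X satisfy p(Tx,Ty) ≤ ψ(p(x,y)) for all x,y ∈ X, where ψ : ℝ≥0 → ℝ≥0 is upper semicontinuous from the right, ψ(t) < t for all t > 0, and ψ(0) = 0. Then for every x ∈ X the Picard sequence {Tⁿx} is p-Cauchy. -/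
open Filter

/-- `ψ` is upper semicontinuous from the right at `t`: whenever `sₙ ↓ t`,
`limsup ψ(sₙ) ≤ ψ(t)`. -/
def USCRightAt (ψ : ℝ → ℝ) (t : ℝ) : Prop :=
  ∀ s : ℕ → ℝ, (∀ n, t ≤ s n) → Antitone s →
    Filter.Tendsto s Filter.atTop (nhds t) →
    Filter.limsup (fun n => ψ (s n)) Filter.atTop ≤ ψ t

/-- `ψ` is upper semicontinuous from the right on `[0,∞)`. -/
def USCRight (ψ : ℝ → ℝ) : Prop := ∀ t, 0 ≤ t → USCRightAt ψ t

open Topology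

/-! The consecutive distances `p(xₙ, xₙ₊₁)` decrease to some `δ`, and right upper semicontinuity
gives `δ ≤ ψ(δ)`, so `δ = 0`; the same holds for `p(xₙ₊₁, xₙ)`. If the orbit were not p-Cauchy,
there would be an `ε > 0` and pairs `n ≤ k`, arbitrarily far out, with
`p(xₙ, xₖ) ≤ ε < p(xₙ, xₖ₊₁)`. These distances `rⱼ` tend to `ε` from above, and one contraction
step from both ends gives `rⱼ ≤ ψ(rⱼ) + o(1)`; along a strictly decreasing subsequence, upper
semicontinuity yields `ε ≤ ψ(ε)`, a contradiction. As `p` need not be symmetric, the pairs with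
`m ≤ n` are handled by the same argument for the transposed `p`. -/

lemma Nat.exists_le_and_not_succ_of_le {P : ℕ → Prop} {n m : ℕ} (hn : P n) (hnm : n ≤ m)
    (hm : ¬P m) : ∃ k, n ≤ k ∧ P k ∧ ¬P (k + 1) := by
  induction m, hnm using Nat.le_induction with
  | base => exact absurd hn hm
  | succ m hnm ih =>
    by_cases hPm : P m
    · exact ⟨m, hnm, hPm, hm⟩
    · exact ih hPm

lemma exists_strictAnti_subseq_of_tendsto {s : ℕ → ℝ} {t : ℝ} (hst : ∀ n, t < s n)
    (hs : Tendsto s atTop (𝓝 t)) : ∃ φ : ℕ → ℕ, StrictMono φ ∧ StrictAnti (s ∘ φ) := by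
  -- `(s n - t)⁻¹ → ∞`, and a strictly increasing subsequence of it is what we want.
  have hinv : Tendsto (fun n => (s n - t)⁻¹) atTop atTop := by
    refine tendsto_inv_nhdsGT_zero.comp (tendsto_nhdsWithin_iff.2 ⟨?_, ?_⟩)
    · simpa using hs.sub_const t
    · exact Eventually.of_forall fun n => sub_pos.2 (hst n)
  obtain ⟨φ, hφ, hmono⟩ := strictMono_subseq_of_tendsto_atTop hinv
  refine ⟨φ, hφ, fun i j hij => ?_⟩
  have := (inv_lt_inv₀ (sub_pos.2 (hst _)) (sub_pos.2 (hst _))).1 (hmono hij)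
  simp only [Function.comp_apply]
  linarith

lemma USCRightAt.le_apply_of_antitone {ψ : ℝ → ℝ} {t : ℝ} (h : USCRightAt ψ t)
    {s v : ℕ → ℝ} (hst : ∀ n, t ≤ s n) (hs_anti : Antitone s) (hs : Tendsto s atTop (𝓝 t))
    (hv : Tendsto v atTop (𝓝 t)) (hvψ : ∀ n, v n ≤ ψ (s n))
    (hbdd : IsBoundedUnder (· ≤ ·) atTop fun n => ψ (s n)) : t ≤ ψ t :=
  calc t = limsup v atTop := hv.limsup_eq.symm
    _ ≤ limsup (fun n => ψ (s n)) atTop :=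
        limsup_le_limsup (Eventually.of_forall hvψ) hv.isCoboundedUnder_le hbdd
    _ ≤ ψ t := h s hst hs_anti hs

lemma USCRightAt.le_apply_of_tendsto {ψ : ℝ → ℝ} {t : ℝ} (h : USCRightAt ψ t)
    {s v : ℕ → ℝ} (hst : ∀ n, t < s n) (hs : Tendsto s atTop (𝓝 t))
    (hv : Tendsto v atTop (𝓝 t)) (hvψ : ∀ n, v n ≤ ψ (s n))
    (hbdd : IsBoundedUnder (· ≤ ·) atTop fun n => ψ (s n)) : t ≤ ψ t := by
  obtain ⟨φ, hφ, hanti⟩ := exists_strictAnti_subseq_of_tendsto hst hs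
  refine h.le_apply_of_antitone (s := s ∘ φ) (v := v ∘ φ) (fun n => (hst _).le)
    hanti.antitone (hs.comp hφ.tendsto_atTop) (hv.comp hφ.tendsto_atTop) (fun n => hvψ _) ?_
  obtain ⟨B, hB⟩ := hbdd
  exact ⟨B, hφ.tendsto_atTop.eventually hB⟩

lemma apply_le_self_of_lt_self {ψ : ℝ → ℝ} (hψ_lt : ∀ t, 0 < t → ψ t < t) (hψ_zero : ψ 0 = 0)
    {t : ℝ} (ht : 0 ≤ t) : ψ t ≤ t := by
  rcases ht.eq_or_lt with rfl | ht
  · exact hψ_zero.le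
  · exact (hψ_lt t ht).le

lemma tendsto_zero_of_le_apply {ψ : ℝ → ℝ} (hψ_usc : USCRight ψ)
    (hψ_lt : ∀ t, 0 < t → ψ t < t) (hψ_zero : ψ 0 = 0)
    {u : ℕ → ℝ} (hu : ∀ n, 0 ≤ u n) (hstep : ∀ n, u (n + 1) ≤ ψ (u n)) :
    Tendsto u atTop (𝓝 0) := by
  have hψ_le : ∀ n, ψ (u n) ≤ u n := fun n => apply_le_self_of_lt_self hψ_lt hψ_zero (hu n)
  have hanti : Antitone u := antitone_nat_of_succ_le fun n => (hstep n).trans (hψ_le n)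
  have hbdd : BddBelow (Set.range u) := ⟨0, by rintro _ ⟨n, rfl⟩; exact hu n⟩
  have hlim : Tendsto u atTop (𝓝 (⨅ n, u n)) := tendsto_atTop_ciInf hanti hbdd
  rcases (le_ciInf hu).eq_or_lt with h | hpos
  · rwa [← h] at hlim
  · have := (hψ_usc _ hpos.le).le_apply_of_antitone (fun n => ciInf_le hbdd n) hanti hlim
      (hlim.comp (tendsto_add_atTop_nat 1)) hstep
      (isBoundedUnder_of ⟨u 0, fun n => (hψ_le n).trans (hanti n.zero_le)⟩)
    exact absurd this (hψ_lt _ hpos).not_ge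

section BoydWong

variable {X : Type*} {p : X → X → ℝ} {ψ : ℝ → ℝ} {f : ℕ → X}

lemma tendsto_succ_of_le_apply (hp_nonneg : ∀ x y, 0 ≤ p x y) (hψ_usc : USCRight ψ)
    (hψ_lt : ∀ t, 0 < t → ψ t < t) (hψ_zero : ψ 0 = 0)
    (hf : ∀ n m, p (f (n + 1)) (f (m + 1)) ≤ ψ (p (f n) (f m))) :
    Tendsto (fun n => p (f n) (f (n + 1))) atTop (𝓝 0) :=
  tendsto_zero_of_le_apply hψ_usc hψ_lt hψ_zero (fun _ => hp_nonneg _ _) fun n => hf n (n + 1)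

lemma tendsto_self_of_le_apply (hp_nonneg : ∀ x y, 0 ≤ p x y)
    (hp_tri : ∀ x y z, p x z ≤ p x y + p y z) (hψ_usc : USCRight ψ)
    (hψ_lt : ∀ t, 0 < t → ψ t < t) (hψ_zero : ψ 0 = 0)
    (hf : ∀ n m, p (f (n + 1)) (f (m + 1)) ≤ ψ (p (f n) (f m))) :
    Tendsto (fun n => p (f n) (f n)) atTop (𝓝 0) := by
  have hd := tendsto_succ_of_le_apply hp_nonneg hψ_usc hψ_lt hψ_zero hf
  have he := tendsto_succ_of_le_apply (p := fun x y => p y x) (fun x y => hp_nonneg y x)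
    hψ_usc hψ_lt hψ_zero fun n m => hf m n
  refine tendsto_of_tendsto_of_tendsto_of_le_of_le tendsto_const_nhds (by simpa using hd.add he)
    (fun n => hp_nonneg _ _) fun n => hp_tri _ (f (n + 1)) _

lemma eventually_le_of_le_apply (hp_nonneg : ∀ x y, 0 ≤ p x y)
    (hp_tri : ∀ x y z, p x z ≤ p x y + p y z) (hψ_usc : USCRight ψ)
    (hψ_lt : ∀ t, 0 < t → ψ t < t) (hψ_zero : ψ 0 = 0)
    (hf : ∀ n m, p (f (n + 1)) (f (m + 1)) ≤ ψ (p (f n) (f m))) {ε : ℝ} (hε : 0 < ε) :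
    ∃ N, ∀ n m, N ≤ n → n ≤ m → p (f n) (f m) ≤ ε := by
  have hd := tendsto_succ_of_le_apply hp_nonneg hψ_usc hψ_lt hψ_zero hf
  have he := tendsto_succ_of_le_apply (p := fun x y => p y x) (fun x y => hp_nonneg y x)
    hψ_usc hψ_lt hψ_zero fun n m => hf m n
  obtain ⟨N₀, hN₀⟩ := eventually_atTop.1
    ((tendsto_self_of_le_apply hp_nonneg hp_tri hψ_usc hψ_lt hψ_zero hf).eventually
      (ge_mem_nhds hε))
  by_contra! hfar
  have hcross : ∀ j, ∃ n k, j ≤ n ∧ n ≤ k ∧ p (f n) (f k) ≤ ε ∧ ε < p (f n) (f (k + 1)) := by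
    intro j
    obtain ⟨n, m, hn, hnm, hm⟩ := hfar (max j N₀)
    obtain ⟨k, hnk, hk, hk1⟩ := Nat.exists_le_and_not_succ_of_le
      (P := fun k => p (f n) (f k) ≤ ε) (hN₀ n (le_of_max_le_right hn)) hnm hm.not_ge
    exact ⟨n, k, le_of_max_le_left hn, hnk, hk, not_le.1 hk1⟩
  choose n k hjn hnk hk hk1 using hcross
  have hjk : ∀ j, j ≤ k j := fun j => (hjn j).trans (hnk j)
  set r := fun j => p (f (n j)) (f (k j + 1))
  have hr_le : ∀ j, r j ≤ ε + p (f (k j)) (f (k j + 1)) := fun j =>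
    (hp_tri _ _ _).trans (by linarith [hk j])
  have hr_lim : Tendsto r atTop (𝓝 ε) := by
    refine tendsto_of_tendsto_of_tendsto_of_le_of_le tendsto_const_nhds ?_
      (fun j => (hk1 j).le) hr_le
    simpa using tendsto_const_nhds.add (hd.comp (tendsto_atTop_mono hjk tendsto_id))
  set v := fun j => r j - p (f (n j)) (f (n j + 1)) - p (f (k j + 1 + 1)) (f (k j + 1))
  have hv_le : ∀ j, v j ≤ ψ (r j) := by
    intro j
    have h1 := hp_tri (f (n j)) (f (n j + 1)) (f (k j + 1))
    have h2 := hp_tri (f (n j + 1)) (f (k j + 1 + 1)) (f (k j + 1))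
    have h3 := hf (n j) (k j + 1)
    simp only [v, r]
    linarith
  have hv_lim : Tendsto v atTop (𝓝 ε) := by
    have hd' := hd.comp (tendsto_atTop_mono hjn tendsto_id)
    have he' := he.comp (tendsto_atTop_mono (fun j => (hjk j).trans (k j).le_succ) tendsto_id)
    simpa using (hr_lim.sub hd').sub he'
  have hbdd : IsBoundedUnder (· ≤ ·) atTop fun j => ψ (r j) :=
    hr_lim.isBoundedUnder_le.mono_le (Eventually.of_forall fun j =>
      apply_le_self_of_lt_self hψ_lt hψ_zero (hp_nonneg _ _))
  exact (hψ_lt ε hε).not_ge ((hψ_usc ε hε.le).le_apply_of_tendsto hk1 hr_lim hv_lim hv_le hbdd)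

theorem tendsto_prod_of_le_apply (hp_nonneg : ∀ x y, 0 ≤ p x y)
    (hp_tri : ∀ x y z, p x z ≤ p x y + p y z) (hψ_usc : USCRight ψ)
    (hψ_lt : ∀ t, 0 < t → ψ t < t) (hψ_zero : ψ 0 = 0)
    (hf : ∀ n m, p (f (n + 1)) (f (m + 1)) ≤ ψ (p (f n) (f m))) :
    Tendsto (fun q : ℕ × ℕ => p (f q.1) (f q.2)) atTop (𝓝 0) := by
  rw [Metric.tendsto_atTop]
  intro ε hε
  obtain ⟨N₁, hN₁⟩ := eventually_le_of_le_apply hp_nonneg hp_tri hψ_usc hψ_lt hψ_zero hf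
    (half_pos hε)
  obtain ⟨N₂, hN₂⟩ := eventually_le_of_le_apply (p := fun x y => p y x) (fun x y => hp_nonneg y x)
    (fun x y z => (hp_tri z y x).trans_eq (add_comm _ _)) hψ_usc hψ_lt hψ_zero
    (fun n m => hf m n) (half_pos hε)
  refine ⟨(max N₁ N₂, max N₁ N₂), fun q ⟨hq₁, hq₂⟩ => ?_⟩
  have hle : p (f q.1) (f q.2) ≤ ε / 2 := by
    rcases le_total q.1 q.2 with h | h
    · exact hN₁ _ _ (le_of_max_le_left hq₁) h
    · exact hN₂ _ _ (le_of_max_le_right hq₂) h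
  rw [Real.dist_eq, sub_zero, abs_of_nonneg (hp_nonneg _ _)]
  linarith

end BoydWong

theorem stmt_13_general {X : Type*}
    (p : X → X → ℝ)
    (hp_nonneg : ∀ x y, 0 ≤ p x y)
    (hp_tri : ∀ x y z, p x z ≤ p x y + p y z)
    (T : X → X) (ψ : ℝ → ℝ)
    (hψ_usc : USCRight ψ)
    (hψ_lt : ∀ t, 0 < t → ψ t < t)
    (hψ_zero : ψ 0 = 0)
    (hcontr : ∀ x y : X, p (T x) (T y) ≤ ψ (p x y)) :
    ∀ x : X,
      Tendsto (fun q : ℕ × ℕ => p (T^[q.1] x) (T^[q.2] x)) atTop (nhds 0) := by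
  intro x
  refine tendsto_prod_of_le_apply (f := fun n => T^[n] x) hp_nonneg hp_tri hψ_usc hψ_lt hψ_zero
    fun n m => ?_
  simpa only [Function.iterate_succ_apply'] using hcontr (T^[n] x) (T^[m] x)

/-- For a Boyd–Wong type E-contraction, every Picard sequence is p-Cauchy. -/
theorem stmt_13 {X : Type*} [UniformSpace X]
    (p : X → X → ℝ)
    (hp_nonneg : ∀ x y, 0 ≤ p x y)
    (hp_tri : ∀ x y z, p x z ≤ p x y + p y z)
    (hp_ent : ∀ U ∈ uniformity X, ∃ δ > (0:ℝ),
      ∀ x y z : X, p z x ≤ δ → p z y ≤ δ → (x, y) ∈ U)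
    (T : X → X) (ψ : ℝ → ℝ)
    (hψ_nonneg : ∀ t, 0 ≤ t → 0 ≤ ψ t)
    (hψ_usc : USCRight ψ)
    (hψ_lt : ∀ t, 0 < t → ψ t < t)
    (hψ_zero : ψ 0 = 0)
    (hcontr : ∀ x y : X, p (T x) (T y) ≤ ψ (p x y)) :
    ∀ x : X,
      Tendsto (fun q : ℕ × ℕ => p (T^[q.1] x) (T^[q.2] x)) atTop (nhds 0) :=
  stmt_13_general p hp_nonneg hp_tri T ψ hψ_usc hψ_lt hψ_zero hcontr
end

section
/- Define T : [0,1] → [0,1] by Tx = 0 for 0 ≤ x < 1 and T1 = 1/4. Then there is no function ψ : ℝ≥0 → ℝ≥0 with ψ(t) < t for all t > 0 such that |Tx − Ty| ≤ ψ(|x − y|) for all x,y ∈ [0,1]; but with the E-distance p(x,y) = max{x,y}, T satisfies p(Tx,Ty) ≤ p(x,y)/4 for all x,y ∈ [0,1]. -/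
/-!
At `x = 1`, `y = 3/4` the map `T` preserves the distance `1/4`, which no `ψ` with `ψ t < t` allows.
On the other hand `T x ≤ x / 4` pointwise, and `max` is monotone and commutes with division by `4`.
-/

lemma not_exists_dist_le_of_dist_le_dist {X Y : Type*} [MetricSpace X] [PseudoMetricSpace Y]
    {f : X → Y} {x y : X} (hne : x ≠ y) (h : dist x y ≤ dist (f x) (f y)) :
    ¬ ∃ ψ : ℝ → ℝ, (∀ t : ℝ, 0 < t → ψ t < t) ∧ ∀ x y : X, dist (f x) (f y) ≤ ψ (dist x y) := by
  rintro ⟨ψ, hψ, hf⟩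
  linarith [hψ _ (dist_pos.2 hne), hf x y]

/-- The map `T` with `Tx = 0` for `x < 1`, `T1 = 1/4` satisfies no Boyd–Wong
metric contraction condition, yet is a Boyd–Wong contraction for the
E-distance `p x y = max x y` with `ψ t = t/4`. -/
theorem stmt_16 (T : Set.Icc (0:ℝ) 1 → Set.Icc (0:ℝ) 1)
    (hT : ∀ x : Set.Icc (0:ℝ) 1, (T x : ℝ) = if (x : ℝ) = 1 then 1/4 else 0) :
    (¬ ∃ ψ : ℝ → ℝ, (∀ t : ℝ, 0 < t → ψ t < t) ∧
        ∀ x y : Set.Icc (0:ℝ) 1, |(T x : ℝ) - (T y : ℝ)| ≤ ψ |(x : ℝ) - (y : ℝ)|) ∧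
    (∀ x y : Set.Icc (0:ℝ) 1,
        max (T x : ℝ) (T y : ℝ) ≤ max (x : ℝ) (y : ℝ) / 4) := by
  let one : Set.Icc (0:ℝ) 1 := ⟨1, by norm_num⟩
  let threeQuarters : Set.Icc (0:ℝ) 1 := ⟨3/4, by norm_num⟩
  have hne : one ≠ threeQuarters := by norm_num [one, threeQuarters, Subtype.ext_iff]
  have hdist : dist one threeQuarters ≤ dist (T one) (T threeQuarters) := by
    simp only [Subtype.dist_eq, Real.dist_eq, hT, one, threeQuarters]
    norm_num
  have hT_le (x : Set.Icc (0:ℝ) 1) : (T x : ℝ) ≤ x / 4 := by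
    rw [hT]
    split_ifs with hx
    · rw [hx]
    · linarith [x.2.1]
  refine ⟨?_, fun x y => ?_⟩
  · simpa only [Subtype.dist_eq, Real.dist_eq] using not_exists_dist_le_of_dist_le_dist hne hdist
  · exact (max_le_max (hT_le x) (hT_le y)).trans_eq (max_div_div_right (by norm_num) _ _)
end
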